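/- arXiv:0802.0709 — 4 statements merged into one kernel-verified Lean document; each statement's English description precedes it below -/
import Mathlib

section
/- If G₀ ≤ G has finite index and H₀ ≤ G₀ is closed in the profinite topology of G₀, then H₀ is closed in the profinite topology of G. -/
/-
Every coset of a finite-index subgroup `K` is open in the profinite topology, being a union of
cosets of the finite-index normal subgroup `K.normalCore`. Hence a finite-index subgroup `G₀` is
closed (its complement is a union of its cosets), and the subspace topology that `G₀` inherits
from `G` is coarser than its own profinite topology: a finite-index normal subgroup of `G₀` is a
finite-index subgroup of `G`. A closed subset of `G₀` is thus closed in the closed subspace `G₀`,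
hence in `G`.
-/

open Pointwise

/-- The profinite topology on a group: generated by cosets of finite-index
normal subgroups. -/
def profiniteTopology (G : Type*) [Group G] : TopologicalSpace G :=
  TopologicalSpace.generateFrom
    {s : Set G | ∃ (N : Subgroup G) (g : G), N.Normal ∧ N.FiniteIndex ∧ s = g • (N : Set G)}

open Topology

section ProfiniteTopology

variable {G : Type*} [Group G]

theorem isOpen_profiniteTopology_smul_of_normal (g : G) (N : Subgroup G) [N.Normal]
    [N.FiniteIndex] :
    IsOpen[profiniteTopology G] (g • (N : Set G)) :=
  TopologicalSpace.GenerateOpen.basic _ ⟨N, g, inferInstance, inferInstance, rfl⟩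

theorem isOpen_profiniteTopology_smul_of_finiteIndex (g : G) (K : Subgroup G) [K.FiniteIndex] :
    IsOpen[profiniteTopology G] (g • (K : Set G)) := by
  let := profiniteTopology G
  refine isOpen_iff_forall_mem_open.2 ?_
  rintro _ ⟨k, hk, rfl⟩
  refine ⟨(g • k) • (K.normalCore : Set G), ?_, isOpen_profiniteTopology_smul_of_normal _ _,
    ⟨1, K.normalCore.one_mem, mul_one _⟩⟩
  rintro _ ⟨n, hn, rfl⟩
  exact ⟨k * n, K.mul_mem hk (K.normalCore_le hn), (mul_assoc g k n).symm⟩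

theorem isClosed_profiniteTopology_of_finiteIndex (K : Subgroup G) [K.FiniteIndex] :
    IsClosed[profiniteTopology G] (K : Set G) := by
  let := profiniteTopology G
  refine ⟨isOpen_iff_forall_mem_open.2 fun x hx => ?_⟩
  refine ⟨x • (K : Set G), ?_, isOpen_profiniteTopology_smul_of_finiteIndex x K,
    ⟨1, K.one_mem, mul_one x⟩⟩
  rintro _ ⟨k, hk, rfl⟩ hxk
  exact hx (by simpa using K.mul_mem hxk (K.inv_mem hk))

theorem induced_subtype_le_profiniteTopology (K : Subgroup G) [K.FiniteIndex] :
    TopologicalSpace.induced ((↑) : K → G) (profiniteTopology G) ≤ profiniteTopology K := by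
  refine TopologicalSpace.le_generateFrom_iff_subset_isOpen.2 ?_
  rintro _ ⟨N, g, -, hN, rfl⟩
  have : (N.map K.subtype).FiniteIndex := by
    rw [Subgroup.finiteIndex_iff, Subgroup.index_map_subtype]
    exact mul_ne_zero hN.index_ne_zero Subgroup.FiniteIndex.index_ne_zero
  refine ⟨(g : G) • (N.map K.subtype : Set G),
    isOpen_profiniteTopology_smul_of_finiteIndex _ _, ?_⟩
  ext x
  simp only [Set.mem_preimage, Set.mem_smul_set_iff_inv_smul_mem, SetLike.mem_coe]
  exact Subgroup.mem_map_iff_mem K.subtype_injective (x := g⁻¹ • x)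

end ProfiniteTopology

theorem isClosed_of_isClosed_in_finiteIndex {G : Type*} [Group G]
    (G₀ : Subgroup G) (hG₀ : G₀.FiniteIndex) (H₀ : Subgroup G₀)
    (h : @IsClosed G₀ (profiniteTopology G₀) (H₀ : Set G₀)) :
    @IsClosed G (profiniteTopology G) (((↑) : G₀ → G) '' (H₀ : Set G₀)) :=
  let := profiniteTopology G
  (isClosed_profiniteTopology_of_finiteIndex G₀).isClosedMap_subtype_val _
    (h.mono (@induced_subtype_le_profiniteTopology _ _ G₀ hG₀))
end

section
/- Let G be a group, G₀ ≤ G a subgroup of finite index, H ≤ G, and H₀ = H ∩ G₀. If the intersection of n essentially distinct G₀-conjugates of H₀ is infinite, then the intersection of n essentially distinct G-conjugates of H is infinite; hence the height of H₀ in G₀ is at most the height of H in G. -/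
open Pointwise

/-- The conjugate subgroup `gHg⁻¹`. -/
def conjSubgroup {G : Type*} [Group G] (g : G) (H : Subgroup G) : Subgroup G :=
  H.map (MulAut.conj g).toMonoidHom

/-- Elements are essentially distinct (w.r.t. `H`) if they determine pairwise
distinct left cosets of `H`. -/
def EssentiallyDistinct {G : Type*} [Group G] (H : Subgroup G) {n : ℕ}
    (g : Fin n → G) : Prop :=
  ∀ i j : Fin n, g i • (H : Set G) = g j • (H : Set G) → i = j

/-- `H` has height at least `n` in `G` if there are `n` essentially distinct
conjugates of `H` whose intersection is infinite. -/
def HeightGE {G : Type*} [Group G] (H : Subgroup G) (n : ℕ) : Prop :=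
  ∃ g : Fin n → G, EssentiallyDistinct H g ∧
    (⋂ i : Fin n, (conjSubgroup (g i) H : Set G)).Infinite

/-- If the intersection of `n` essentially distinct `G₀`-conjugates of
`H₀ = H ∩ G₀` is infinite, then so is the intersection of some `n` essentially
distinct `G`-conjugates of `H`; hence the height of `H₀` in `G₀` is at most the
height of `H` in `G`. -/
theorem heightGE_of_heightGE_subgroupOf {G : Type*} [Group G]
    (G₀ : Subgroup G) (hG₀ : G₀.FiniteIndex) (H : Subgroup G) (n : ℕ)
    (h : HeightGE (H.subgroupOf G₀) n) : HeightGE H n := by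
  obtain ⟨g, hed, hinf⟩ := h
  refine ⟨fun i => (g i : G), ?_, ?_⟩
  · intro i j hij
    apply hed i j
    rw [leftCoset_eq_iff] at hij ⊢
    simpa [Subgroup.mem_subgroupOf] using hij
  · have := (hinf.image (Subtype.val_injective.injOn))
    refine this.mono ?_
    rintro x ⟨y, hy, rfl⟩
    simp only [Set.mem_iInter] at hy ⊢
    intro i
    obtain ⟨z, hz, hzy⟩ := hy i
    refine ⟨z, hz, ?_⟩
    simpa using congrArg Subtype.val hzy
end

section
/- Let Γ be a connected graph and ℋ(Γ) the combinatorial horoball on Γ. For vertices (v,k) and (w,k) at the same depth k with d_Γ(v,w) = d, the distance in ℋ(Γ) between (v,k) and (w,k) is at most 2⌈log₂(max(d,1))⌉ + 3 (independently of k, and up to an additive constant equal to 2 log₂ d). -/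
/-! To join `(v, k)` and `(w, k)`, climb to a depth `n` with `d_Γ(v, w) ≤ 2 ^ n`, cross in one
horizontal edge there, and climb back down. With `n = ⌈log₂ d⌉ + 1` (or `k` itself if that is
deeper) this takes at most `2⌈log₂ d⌉ + 3` edges. -/

/-- The combinatorial horoball on a graph `Γ`: vertices are `V × ℕ` (`(v, k)`
is `v` at depth `k`); vertical edges join `(v, k)` and `(v, k+1)`; horizontal
edges at depth `0` are the edges of `Γ`, and at depth `k > 0` join `(v, k)` and
`(w, k)` whenever `0 < d_Γ(v, w) ≤ 2 ^ k`. -/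
def horoball {V : Type*} (Γ : SimpleGraph V) : SimpleGraph (V × ℕ) where
  Adj p q :=
    (p.2 = q.2 ∧ ((p.2 = 0 ∧ Γ.Adj p.1 q.1) ∨
      (0 < p.2 ∧ p.1 ≠ q.1 ∧ Γ.dist p.1 q.1 ≤ 2 ^ p.2))) ∨
    (p.1 = q.1 ∧ (p.2 = q.2 + 1 ∨ q.2 = p.2 + 1))
  symm := by
    constructor
    rintro ⟨v, k⟩ ⟨w, l⟩ (⟨h, ⟨h0, ha⟩ | ⟨hk, hne, hd⟩⟩ | ⟨h, hl⟩)
    · subst h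
      exact Or.inl ⟨rfl, Or.inl ⟨h0, ha.symm⟩⟩
    · subst h
      exact Or.inl ⟨rfl, Or.inr ⟨hk, hne.symm, by rwa [SimpleGraph.dist_comm]⟩⟩
    · exact Or.inr ⟨h.symm, hl.symm⟩
  loopless := by
    constructor
    rintro ⟨v, k⟩ (⟨-, ⟨-, ha⟩ | ⟨-, hne, -⟩⟩ | ⟨-, hl | hl⟩)
    · exact Γ.loopless.irrefl v ha
    · exact hne rfl
    · omega
    · omega

namespace horoball

open SimpleGraph

variable {V : Type*} (Γ : SimpleGraph V)

theorem adj_succ (v : V) (k : ℕ) : (horoball Γ).Adj (v, k + 1) (v, k) :=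
  Or.inr ⟨rfl, Or.inl rfl⟩

theorem adj_of_dist_le_two_pow {v w : V} {n : ℕ} (hn : 0 < n) (hvw : v ≠ w)
    (hd : Γ.dist v w ≤ 2 ^ n) : (horoball Γ).Adj (v, n) (w, n) :=
  Or.inl ⟨rfl, Or.inr ⟨hn, hvw, hd⟩⟩

theorem exists_walk_down (v : V) (k : ℕ) :
    ∀ t : ℕ, ∃ p : (horoball Γ).Walk (v, k + t) (v, k), p.length = t
  | 0 => ⟨Walk.nil, rfl⟩
  | t + 1 =>
    let ⟨p, hp⟩ := exists_walk_down v k t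
    ⟨Walk.cons (adj_succ Γ v (k + t)) p, by simp [hp]⟩

theorem dist_le_of_dist_le_two_pow {v w : V} {k t : ℕ} (hkt : 0 < k + t)
    (hd : Γ.dist v w ≤ 2 ^ (k + t)) : (horoball Γ).dist (v, k) (w, k) ≤ 2 * t + 1 := by
  rcases eq_or_ne v w with rfl | hvw
  · simp
  obtain ⟨down_v, hv⟩ := exists_walk_down Γ v k t
  obtain ⟨down_w, hw⟩ := exists_walk_down Γ w k t
  let cross := adj_of_dist_le_two_pow Γ hkt hvw hd
  calc (horoball Γ).dist (v, k) (w, k)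
      ≤ (down_v.reverse.append (Walk.cons cross down_w)).length := dist_le _
    _ = 2 * t + 1 := by simp only [Walk.length_append, Walk.length_reverse,
        Walk.length_cons, hv, hw]; ring

end horoball

theorem horoball_dist_same_depth_le_general {V : Type*} (Γ : SimpleGraph V)
    (v w : V) (k : ℕ) :
    (horoball Γ).dist (v, k) (w, k) ≤
      2 * Nat.clog 2 (max (Γ.dist v w) 1) + 3 := by
  set m := Nat.clog 2 (max (Γ.dist v w) 1)
  have hd : Γ.dist v w ≤ 2 ^ (k + (m + 1 - k)) :=
    calc Γ.dist v w ≤ max (Γ.dist v w) 1 := le_max_left _ _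
      _ ≤ 2 ^ m := Nat.le_pow_clog one_lt_two _
      _ ≤ 2 ^ (k + (m + 1 - k)) := Nat.pow_le_pow_right two_pos (by omega)
  calc (horoball Γ).dist (v, k) (w, k)
      ≤ 2 * (m + 1 - k) + 1 := horoball.dist_le_of_dist_le_two_pow Γ (by omega) hd
    _ ≤ 2 * m + 3 := by omega

/-- In a combinatorial horoball, two vertices at the same depth `k` whose
`Γ`-distance is `d` are at distance at most `2⌈log₂ (max d 1)⌉ + 3`,
independently of `k`. -/
theorem horoball_dist_same_depth_le {V : Type*} (Γ : SimpleGraph V)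
    (hconn : Γ.Connected) (v w : V) (k : ℕ) :
    (horoball Γ).dist (v, k) (w, k) ≤
      2 * Nat.clog 2 (max (Γ.dist v w) 1) + 3 :=
  horoball_dist_same_depth_le_general Γ v w k
end

section
/- Let Γ be a connected graph with at least two vertices. Then the combinatorial horoball ℋ(Γ) is connected, and for any two vertices (v,m), (w,n), there is a geodesic between them which consists of at most two vertical segments and a single horizontal segment of length at most 3. -/
/-!
A horizontal edge at depth `K` spans a `Γ`-distance of at most `2 ^ K`. So a walk from `(v, m)`
to `(w, n)` whose deepest vertex lies at depth `K` has at least `(K - m) + (K - n)` vertical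
edges and `⌈d / 2 ^ K⌉` horizontal ones, where `d = d_Γ(v, w)`; going down to depth `K`, across
and back up attains this. Hence the distance is the minimum over `K ≥ max m n` of
`2 K - m - n + ⌈d / 2 ^ K⌉`. Passing from `K` to `K + 1` lowers `⌈d / 2 ^ K⌉` by at least `2`
when `d > 3 * 2 ^ K` and by at most `2` otherwise, so the minimum is attained at the least
`K` with `d ≤ 3 * 2 ^ K`, where `⌈d / 2 ^ K⌉ ≤ 3`.
-/

open SimpleGraph

lemma le_two_pow_mul_ceilDiv (d k : ℕ) : d ≤ 2 ^ k * (d ⌈/⌉ 2 ^ k) :=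
  (ceilDiv_le_iff_le_mul (by positivity)).1 le_rfl

lemma ceilDiv_two_pow_le_ceilDiv_two_pow_succ_add_two {d k : ℕ} (h : d ≤ 3 * 2 ^ k) :
    d ⌈/⌉ 2 ^ k ≤ d ⌈/⌉ 2 ^ (k + 1) + 2 := by
  have hle3 : d ⌈/⌉ 2 ^ k ≤ 3 := (ceilDiv_le_iff_le_mul (by positivity)).2 (by rwa [mul_comm])
  have hle2 : d ⌈/⌉ 2 ^ k ≤ 2 * (d ⌈/⌉ 2 ^ (k + 1)) := by
    rw [ceilDiv_le_iff_le_mul (by positivity), ← mul_assoc, ← pow_succ]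
    exact le_two_pow_mul_ceilDiv d (k + 1)
  omega

lemma ceilDiv_two_pow_succ_add_two_le_ceilDiv_two_pow {d k : ℕ} (h : 3 * 2 ^ k < d) :
    d ⌈/⌉ 2 ^ (k + 1) + 2 ≤ d ⌈/⌉ 2 ^ k := by
  set a := d ⌈/⌉ 2 ^ k
  have hda : d ≤ 2 ^ k * a := le_two_pow_mul_ceilDiv d k
  have ha : 4 ≤ a := by
    by_contra! ha
    have : 2 ^ k * a ≤ 2 ^ k * 3 := Nat.mul_le_mul_left _ (by omega)
    omega
  have : d ⌈/⌉ 2 ^ (k + 1) ≤ (a + 1) / 2 := by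
    rw [ceilDiv_le_iff_le_mul (by positivity), pow_succ, mul_assoc]
    exact hda.trans (Nat.mul_le_mul_left _ (by omega))
  omega

lemma exists_min_two_mul_add_ceilDiv_two_pow (d M : ℕ) :
    ∃ k, M ≤ k ∧ d ≤ 3 * 2 ^ k ∧
      ∀ K, M ≤ K → 2 * k + d ⌈/⌉ 2 ^ k ≤ 2 * K + d ⌈/⌉ 2 ^ K := by
  classical
  have hex : ∃ k, M ≤ k ∧ d ≤ 3 * 2 ^ k := by
    refine ⟨M + d, le_add_right le_rfl, ?_⟩
    have : d < 2 ^ (M + d) :=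
      Nat.lt_two_pow_self.trans_le (Nat.pow_le_pow_right two_pos (le_add_left le_rfl))
    omega
  obtain ⟨hMk, hdk⟩ := Nat.find_spec hex
  set k := Nat.find hex
  set f : ℕ → ℕ := fun K ↦ 2 * K + d ⌈/⌉ 2 ^ K
  have hmono : MonotoneOn f (Set.Ici k) :=
    monotoneOn_of_le_succ Set.ordConnected_Ici fun K _ hK _ ↦ by
      have : d ≤ 3 * 2 ^ K := hdk.trans (Nat.mul_le_mul_left _ (Nat.pow_le_pow_right two_pos hK))
      have := ceilDiv_two_pow_le_ceilDiv_two_pow_succ_add_two this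
      simp only [f, Order.succ_eq_add_one]
      omega
  have hanti : AntitoneOn f (Set.Icc M k) :=
    antitoneOn_of_succ_le Set.ordConnected_Icc fun K _ hK hK1 ↦ by
      rw [Order.succ_eq_add_one] at hK1 ⊢
      have : ¬(M ≤ K ∧ d ≤ 3 * 2 ^ K) := Nat.find_min hex (by simp only [Set.mem_Icc] at hK1; omega)
      have := ceilDiv_two_pow_succ_add_two_le_ceilDiv_two_pow (not_le.1 fun h ↦ this ⟨hK.1, h⟩)
      simp only [f]
      omega
  refine ⟨k, hMk, hdk, fun K hK ↦ ?_⟩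
  rcases le_total k K with h | h
  · exact hmono Set.self_mem_Ici h h
  · exact hanti ⟨hK, h⟩ ⟨hMk, le_rfl⟩ h

namespace Horoball

variable {V : Type*} {Γ : SimpleGraph V}

lemma exists_vertical_walk (v : V) {m k : ℕ} (h : m ≤ k) :
    ∃ p : (horoball Γ).Walk (v, m) (v, k), p.length = k - m := by
  induction k, h using Nat.le_induction with
  | base => exact ⟨.nil, by simp⟩
  | succ k hk ih =>
    obtain ⟨p, hp⟩ := ih
    have hadj : (horoball Γ).Adj (v, k) (v, k + 1) := .inr ⟨rfl, .inr rfl⟩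
    exact ⟨p.concat hadj, by rw [Walk.length_concat, hp]; omega⟩

lemma eq_or_adj_of_dist_le (hconn : Γ.Connected) {v u : V} {k : ℕ} (h : Γ.dist v u ≤ 2 ^ k) :
    v = u ∨ (horoball Γ).Adj (v, k) (u, k) := by
  by_cases hvu : v = u
  · exact .inl hvu
  refine .inr (.inl ⟨rfl, ?_⟩)
  rcases k.eq_zero_or_pos with rfl | hk
  · have := hconn.pos_dist_of_ne hvu
    rw [pow_zero] at h
    exact .inl ⟨rfl, (dist_eq_one_iff_adj.1 (by omega) : Γ.Adj v u)⟩
  · exact .inr ⟨hk, hvu, h⟩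

/-- Cut a `Γ`-geodesic into pieces of length `2 ^ k`. -/
lemma exists_horizontal_walk (hconn : Γ.Connected) (k : ℕ) :
    ∀ (c : ℕ) (v w : V), Γ.dist v w ≤ 2 ^ k * c →
      ∃ p : (horoball Γ).Walk (v, k) (w, k), p.length ≤ c := by
  intro c
  induction c with
  | zero =>
    intro v w h
    obtain rfl : v = w := hconn.dist_eq_zero_iff.1 (by simpa using h)
    exact ⟨.nil, le_rfl⟩
  | succ c ih =>
    intro v w h
    obtain ⟨g, hg⟩ := hconn.exists_walk_length_eq_dist v w
    have hvu : Γ.dist v (g.getVert (2 ^ k)) ≤ 2 ^ k :=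
      (dist_le (g.take (2 ^ k))).trans (by rw [Walk.take_length]; exact min_le_left _ _)
    have huw : Γ.dist (g.getVert (2 ^ k)) w ≤ 2 ^ k * c :=
      (dist_le (g.drop (2 ^ k))).trans (by rw [Walk.drop_length, hg]; rw [mul_add_one] at h; omega)
    obtain ⟨q, hq⟩ := ih _ _ huw
    rcases eq_or_adj_of_dist_le hconn hvu with heq | hadj
    · exact ⟨q.copy (congrArg (·, k) heq.symm) rfl, by simpa using hq.trans c.le_succ⟩
    · exact ⟨.cons hadj q, by simp; omega⟩

lemma exists_walk_via_depth (hconn : Γ.Connected) (v w : V) {m n k : ℕ}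
    (hm : m ≤ k) (hn : n ≤ k) :
    ∃ p : (horoball Γ).Walk (v, m) (w, n),
      p.length ≤ (k - m) + Γ.dist v w ⌈/⌉ 2 ^ k + (k - n) := by
  obtain ⟨p₁, h₁⟩ := exists_vertical_walk (Γ := Γ) v hm
  obtain ⟨p₂, h₂⟩ := exists_horizontal_walk hconn k _ v w (le_two_pow_mul_ceilDiv _ k)
  obtain ⟨p₃, h₃⟩ := exists_vertical_walk (Γ := Γ) w hn
  refine ⟨(p₁.append p₂).append p₃.reverse, ?_⟩
  simp only [Walk.length_append, Walk.length_reverse]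
  omega

lemma connected (hconn : Γ.Connected) : (horoball Γ).Connected := by
  have := hconn.nonempty
  rw [connected_iff]
  refine ⟨fun x y ↦ ?_, inferInstance⟩
  obtain ⟨p, -⟩ := exists_walk_via_depth hconn x.1 y.1 (le_max_left x.2 y.2) (le_max_right x.2 y.2)
  exact ⟨p⟩

lemma exists_horizontal_count (hconn : Γ.Connected) {K : ℕ} {x y : V × ℕ}
    (p : (horoball Γ).Walk x y) (hK : ∀ z ∈ p.support, z.2 ≤ K) :
    ∃ h, h + x.2.dist y.2 ≤ p.length ∧ Γ.dist x.1 y.1 ≤ 2 ^ K * h := by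
  induction p with
  | nil => exact ⟨0, by simp [Nat.dist]⟩
  | @cons x b y hadj q ih =>
    obtain ⟨h, hlen, hdist⟩ := ih fun z hz ↦ hK z (by simp [hz])
    have hxK : x.2 ≤ K := hK x (by simp)
    have htri : Γ.dist x.1 y.1 ≤ Γ.dist x.1 b.1 + Γ.dist b.1 y.1 := hconn.dist_triangle
    rw [Walk.length_cons]
    rcases hadj with ⟨hdepth, ⟨-, hΓ⟩ | ⟨-, -, hle⟩⟩ | ⟨hv, hstep⟩
    · refine ⟨h + 1, by unfold Nat.dist at *; omega, ?_⟩
      have : 1 ≤ 2 ^ K := Nat.one_le_two_pow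
      rw [dist_eq_one_iff_adj.2 hΓ] at htri
      rw [mul_add_one]; omega
    · refine ⟨h + 1, by unfold Nat.dist at *; omega, ?_⟩
      have : 2 ^ x.2 ≤ 2 ^ K := Nat.pow_le_pow_right two_pos hxK
      rw [mul_add_one]; omega
    · refine ⟨h, by unfold Nat.dist at *; omega, ?_⟩
      rwa [hv]

lemma exists_depth_le_length (hconn : Γ.Connected) {x y : V × ℕ} (p : (horoball Γ).Walk x y) :
    ∃ K, x.2 ≤ K ∧ y.2 ≤ K ∧ (K - x.2) + Γ.dist x.1 y.1 ⌈/⌉ 2 ^ K + (K - y.2) ≤ p.length := by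
  classical
  obtain ⟨u, hu, hmax⟩ := p.support.toFinset.exists_max_image Prod.snd ⟨x, by simp⟩
  simp only [List.mem_toFinset] at hu hmax
  obtain ⟨h₁, hlen₁, hdist₁⟩ := exists_horizontal_count hconn (p.takeUntil u hu)
    fun z hz ↦ hmax z (p.support_takeUntil_subset_support hu hz)
  obtain ⟨h₂, hlen₂, hdist₂⟩ := exists_horizontal_count hconn (p.dropUntil u hu)
    fun z hz ↦ hmax z (p.support_dropUntil_subset_support hu hz)
  have hlen : (p.takeUntil u hu).length + (p.dropUntil u hu).length = p.length := by
    rw [← Walk.length_append, p.take_spec hu]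
  have hdist : Γ.dist x.1 y.1 ≤ 2 ^ u.2 * (h₁ + h₂) := calc
    Γ.dist x.1 y.1 ≤ Γ.dist x.1 u.1 + Γ.dist u.1 y.1 := hconn.dist_triangle
    _ ≤ 2 ^ u.2 * (h₁ + h₂) := by rw [mul_add]; exact add_le_add hdist₁ hdist₂
  have := (ceilDiv_le_iff_le_mul (by positivity)).2 hdist
  have hx := hmax x p.start_mem_support
  have hy := hmax y p.end_mem_support
  refine ⟨u.2, hx, hy, ?_⟩
  unfold Nat.dist at hlen₁ hlen₂
  omega

end Horoball

theorem horoball_connected_and_geodesics_general {V : Type*} (Γ : SimpleGraph V)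
    (hconn : Γ.Connected) :
    (horoball Γ).Connected ∧
    ∀ (v w : V) (m n : ℕ), ∃ k h : ℕ, m ≤ k ∧ n ≤ k ∧ h ≤ 3 ∧
      (horoball Γ).dist (v, k) (w, k) ≤ h ∧
      (horoball Γ).dist (v, m) (w, n) = (k - m) + h + (k - n) := by
  refine ⟨Horoball.connected hconn, fun v w m n ↦ ?_⟩
  obtain ⟨k, hk, hk3, hmin⟩ := exists_min_two_mul_add_ceilDiv_two_pow (Γ.dist v w) (max m n)
  have hm : m ≤ k := (le_max_left m n).trans hk
  have hn : n ≤ k := (le_max_right m n).trans hk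
  refine ⟨k, Γ.dist v w ⌈/⌉ 2 ^ k, hm, hn,
    (ceilDiv_le_iff_le_mul (by positivity)).2 (by rwa [mul_comm]), ?_, le_antisymm ?_ ?_⟩
  · obtain ⟨p, hp⟩ := Horoball.exists_horizontal_walk hconn k _ v w (le_two_pow_mul_ceilDiv _ k)
    exact (dist_le p).trans hp
  · obtain ⟨p, hp⟩ := Horoball.exists_walk_via_depth hconn v w hm hn
    exact (dist_le p).trans hp
  · obtain ⟨q, hq⟩ := (Horoball.connected hconn).exists_walk_length_eq_dist (v, m) (w, n)
    obtain ⟨K, hmK, hnK, hK⟩ := Horoball.exists_depth_le_length hconn q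
    have := hmin K (max_le hmK hnK)
    dsimp only at hmK hnK hK
    omega

/-- The combinatorial horoball on a connected graph with at least two vertices
is connected, and any two vertices `(v, m)`, `(w, n)` are joined by a geodesic
consisting of at most two vertical segments (from `(v, m)` up to `(v, k)` and
from `(w, k)` down to `(w, n)`) together with a single horizontal segment of
length `h ≤ 3` at depth `k`. -/
theorem horoball_connected_and_geodesics {V : Type*} (Γ : SimpleGraph V)
    (hconn : Γ.Connected) (hV : Nontrivial V) :
    (horoball Γ).Connected ∧
    ∀ (v w : V) (m n : ℕ), ∃ k h : ℕ, m ≤ k ∧ n ≤ k ∧ h ≤ 3 ∧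
      (horoball Γ).dist (v, k) (w, k) ≤ h ∧
      (horoball Γ).dist (v, m) (w, n) = (k - m) + h + (k - n) :=
  horoball_connected_and_geodesics_general Γ hconn
end
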